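/- Let ℜ be a nonempty loc-deterministic set of P-rules satisfying Assumptions 1 and 2 in which every constant occurs. Consider the imitation rule I: its conclusion is C = (x ↦ (y1, ..., yk) * φ) ⋏ ξ ⊢_ℜ^V (p(x, z⃗) * ψ) ⋏ ζ and its premise is P = (x ↦ (y1, ..., yk) * φ) ⋏ ξ ⊢_ℜ^V (x ↦ (y1, ..., yk) * ψ'σ * ψ) ⋏ ζ, under the side conditions: (i) p(x, z⃗) ⇐_ℜ (x ↦ (u1, ..., uk) * ψ') ⋏ ζ'; (ii) σ is a substitution with dom(σ) ⊆ {u1, ..., uk} ∖ ({x} ∪ z⃗); (iii) uiσ = yi for all i ∈ {1, ..., k}; (iv) (x ↦ (y1, ..., yk) * φ) ⋏ ξ ▷_V ζ'σ. Then rule I is sound and invertible: for every heap h, C admits a counter-model of the form (s, h) if and only if P admits a counter-model of the form (s', h). -/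

import Mathlib

open scoped Classical

namespace SLID

/-! ## Signatures, terms and formulas -/

/-- A signature: a set of sorts with a distinguished sort `loc` of memory locations,
predicate symbols with profiles (the first parameter being of sort `loc`),
and constants of each sort (no constants of sort `loc`). -/
structure Sig : Type 1 where
  Srt : Type
  loc : Srt
  Pred : Type
  arity : Pred → ℕ
  arity_pos : ∀ p, 0 < arity p
  psort : Pred → ℕ → Srt
  psort_zero : ∀ p, psort p 0 = loc
  Const : Srt → Type
  noLocConst : IsEmpty (Const loc)

variable {σ : Sig}

/-- Terms: variables of each sort (a countably infinite supply, indexed by `ℕ`)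
and constants. -/
inductive Term (σ : Sig) : Type where
  | var (s : σ.Srt) (n : ℕ) : Term σ
  | cst (s : σ.Srt) (c : σ.Const s) : Term σ

/-- The sort of a term. -/
def Term.sort : Term σ → σ.Srt
  | .var s _ => s
  | .cst s _ => s

/-- Variables, as (sort, index) pairs. -/
abbrev Vr (σ : Sig) : Type := σ.Srt × ℕ

/-- The set of variables of a term. -/
def Term.varSet : Term σ → Set (Vr σ)
  | .var s n => {(s, n)}
  | .cst _ _ => ∅

/-- Spatial atoms: points-to atoms `x ↦ (t₁,…,tₖ)` and predicate atoms
`p(x, t₂,…,tₙ)`.  The root `x` is a variable of sort `loc`, represented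
by its index. -/
inductive SAtom (σ : Sig) : Type where
  | pto (x : ℕ) (ts : List (Term σ)) : SAtom σ
  | pred (p : σ.Pred) (x : ℕ) (args : List (Term σ)) : SAtom σ

/-- The root of a spatial atom. -/
def SAtom.root : SAtom σ → ℕ
  | .pto x _ => x
  | .pred _ x _ => x

/-- The term at position `i` (0-indexed; position `0` is the root) of a
predicate atom. -/
def SAtom.argAt : SAtom σ → ℕ → Option (Term σ)
  | .pred _ x _, 0 => some (Term.var σ.loc x)
  | .pred _ _ args, j + 1 => args[j]?
  | .pto _ _, _ => none

/-- The set of terms occurring in a spatial atom. -/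
def SAtom.termSet : SAtom σ → Set (Term σ)
  | .pto x ts => insert (Term.var σ.loc x) {t | t ∈ ts}
  | .pred _ x args => insert (Term.var σ.loc x) {t | t ∈ args}

/-- The set of variables of a spatial atom. -/
def SAtom.varSet (a : SAtom σ) : Set (Vr σ) := ⋃ t ∈ SAtom.termSet a, Term.varSet t

/-- Pure atoms: equations `t ≈ u` and disequations `t ≉ u`. -/
inductive PAtom (σ : Sig) : Type where
  | eq (t u : Term σ) : PAtom σ
  | ne (t u : Term σ) : PAtom σ

/-- The set of terms occurring in a pure atom. -/
def PAtom.termSet : PAtom σ → Set (Term σ)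
  | .eq t u => {t, u}
  | .ne t u => {t, u}

/-- The set of variables of a pure atom. -/
def PAtom.varSet (a : PAtom σ) : Set (Vr σ) := ⋃ t ∈ PAtom.termSet a, Term.varSet t

/-- Spatial formulas: finite `*`-conjunctions of spatial atoms, taken modulo
associativity-commutativity of `*` (hence multisets); `emp` is `0` and `*` is `+`. -/
abbrev Spatial (σ : Sig) : Type := Multiset (SAtom σ)

/-- Pure formulas: finite conjunctions of equations and disequations, taken modulo
associativity-commutativity of `∧` (hence multisets); `⊤` is `0` and `∧` is `+`. -/
abbrev PureF (σ : Sig) : Type := Multiset (PAtom σ)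

/-- A symbolic heap `φ ⋏ ξ` with `φ` spatial and `ξ` pure. -/
structure SymHeap (σ : Sig) : Type where
  sp : Spatial σ
  pu : PureF σ

/-- The set of variables of a spatial formula. -/
def Spatial.varSet (φ : Spatial σ) : Set (Vr σ) := {v | ∃ a ∈ φ, v ∈ SAtom.varSet a}

/-- The set of variables of a pure formula. -/
def PureF.varSet (ξ : PureF σ) : Set (Vr σ) := {v | ∃ a ∈ ξ, v ∈ PAtom.varSet a}

/-- The set of variables of a symbolic heap. -/
def SymHeap.varSet (l : SymHeap σ) : Set (Vr σ) := Spatial.varSet l.sp ∪ PureF.varSet l.pu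

/-- The set of terms occurring in a symbolic heap. -/
def SymHeap.termSet (l : SymHeap σ) : Set (Term σ) :=
  {t | ∃ a ∈ l.sp, t ∈ SAtom.termSet a} ∪ {t | ∃ a ∈ l.pu, t ∈ PAtom.termSet a}

/-- `alloc(φ)`: the multiset of roots of the spatial atoms of `φ`
(as indices of variables of sort `loc`). -/
def alloc (φ : Spatial σ) : Multiset ℕ := φ.map SAtom.root

/-- `alloc(λ)` for a symbolic heap `λ`. -/
def SymHeap.alloc (l : SymHeap σ) : Multiset ℕ := SLID.alloc l.sp

/-- Sort-correctness of a pure atom. -/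
def PAtom.WF : PAtom σ → Prop
  | .eq t u => Term.sort t = Term.sort u
  | .ne t u => Term.sort t = Term.sort u

/-- Sort-correctness of a spatial atom. -/
def SAtom.WF : SAtom σ → Prop
  | .pto _ _ => True
  | .pred p _ args => args.length + 1 = σ.arity p ∧
      ∀ (i : ℕ) (hi : i < args.length), Term.sort (args[i]'hi) = σ.psort p (i + 1)

/-- Sort-correctness of a symbolic heap. -/
def SymHeap.WF (l : SymHeap σ) : Prop := (∀ a ∈ l.sp, SAtom.WF a) ∧ (∀ a ∈ l.pu, PAtom.WF a)

/-! ## Inductive rules -/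

/-- An inductive rule `p(x₁,…,xₙ) ⇐ λ`: the parameters `x₁,…,xₙ` are pairwise
distinct variables of the profile sorts of the head `p`, and the body `λ` is a
symbolic heap. -/
structure Rule (σ : Sig) : Type where
  head : σ.Pred
  param : ℕ → ℕ
  param_inj : ∀ i j, i < σ.arity head → j < σ.arity head → i ≠ j →
    ((σ.psort head i, param i) : Vr σ) ≠ ((σ.psort head j, param j) : Vr σ)
  body : SymHeap σ
  body_wf : SymHeap.WF body

/-- The `i`-th parameter of a rule, as a term. -/
def Rule.paramTerm (r : Rule σ) (i : ℕ) : Term σ := Term.var (σ.psort r.head i) (r.param i)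

/-- The set of parameters of a rule, as terms. -/
def Rule.paramTermSet (r : Rule σ) : Set (Term σ) := {t | ∃ i < σ.arity r.head, t = r.paramTerm i}

/-- The set of parameters of a rule, as variables. -/
def Rule.paramVarSet (r : Rule σ) : Set (Vr σ) :=
  {v | ∃ i < σ.arity r.head, v = ((σ.psort r.head i, r.param i) : Vr σ)}

/-- The set of terms occurring in (the body of) a rule. -/
def Rule.termSet (r : Rule σ) : Set (Term σ) := SymHeap.termSet r.body

/-- P-rules: rules of the form
`p(x₁,…,xₙ) ⇐ (x₁ ↦ (y₁,…,yₖ) * q₁(z₁,u⃗₁) * ⋯ * qₘ(zₘ,u⃗ₘ)) ⋏ ξ` where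
(1) `ξ` is a conjunction of disequations `u ≉ v` with `u ∈ {x₁,…,xₙ,y₁,…,yₖ}`
    and `v ∈ {y₁,…,yₖ} ∖ {x₁,…,xₙ}`;
(2) `{z₁,…,zₘ} = ({y₁,…,yₖ} ∖ {x₁,…,xₙ}) ∩ V_loc`, with `z₁,…,zₘ` pairwise distinct;
(3) every element of each `u⃗ᵢ` is a parameter, one of the `yⱼ`, or a constant. -/
def Rule.IsPRule (r : Rule σ) : Prop :=
  ∃ (ys : List (Term σ)) (ps : Multiset (SAtom σ)),
    r.body.sp = (SAtom.pto (r.param 0) ys) ::ₘ ps ∧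
    (∀ a ∈ ps, ∃ (q : σ.Pred) (z : ℕ) (args : List (Term σ)), a = SAtom.pred q z args) ∧
    (∀ pa ∈ r.body.pu, ∃ u v : Term σ, pa = PAtom.ne u v ∧
      (u ∈ Rule.paramTermSet r ∨ u ∈ ys) ∧ (v ∈ ys ∧ v ∉ Rule.paramTermSet r)) ∧
    ({t : Term σ | ∃ a ∈ ps, t = Term.var σ.loc (SAtom.root a)} =
      {t : Term σ | t ∈ ys ∧ t ∉ Rule.paramTermSet r ∧ Term.sort t = σ.loc}) ∧
    Multiset.Nodup (Multiset.map SAtom.root ps) ∧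
    (∀ a ∈ ps, ∀ (q : σ.Pred) (z : ℕ) (args : List (Term σ)), a = SAtom.pred q z args →
      ∀ t ∈ args, t ∈ Rule.paramTermSet r ∨ t ∈ ys ∨ ∃ (s : σ.Srt) (c : σ.Const s), t = Term.cst s c)

/-- Productive predicate symbols (least fixpoint): `p` is productive w.r.t. `R`
if `R` contains a rule for `p` all of whose body predicates are productive. -/
inductive Productive (R : Set (Rule σ)) : σ.Pred → Prop where
  | intro (r : Rule σ) : r ∈ R →
      (∀ (q : σ.Pred) (z : ℕ) (args : List (Term σ)),
        SAtom.pred q z args ∈ r.body.sp → Productive R q) →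
      Productive R r.head

/-- `out_ℜ(p)` (0-indexed): outgoing parameter indices, as a least fixpoint. -/
inductive OutParam (R : Set (Rule σ)) : σ.Pred → ℕ → Prop where
  | pto (r : Rule σ) (i : ℕ) (ts : List (Term σ)) :
      r ∈ R → i < σ.arity r.head → σ.psort r.head i = σ.loc →
      SAtom.pto (r.param 0) ts ∈ r.body.sp → r.paramTerm i ∈ ts →
      OutParam R r.head i
  | pred (r : Rule σ) (i : ℕ) (q : σ.Pred) (z : ℕ) (args : List (Term σ)) (j : ℕ) :
      r ∈ R → i < σ.arity r.head → σ.psort r.head i = σ.loc →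
      SAtom.pred q z args ∈ r.body.sp → OutParam R q j →
      SAtom.argAt (SAtom.pred q z args) j = some (r.paramTerm i) →
      OutParam R r.head i

/-- The relation `x →_φ y` on variables of sort `loc` (Definition of `→`):
`φ` contains a predicate atom with root `x` and `y` at an outgoing position,
or a points-to atom with root `x` and `y` in its tuple. -/
def PathTo (R : Set (Rule σ)) (φ : Spatial σ) (x y : ℕ) : Prop :=
  (∃ ts, SAtom.pto x ts ∈ φ ∧ Term.var σ.loc y ∈ ts) ∨
  (∃ (p : σ.Pred) (args : List (Term σ)) (i : ℕ), SAtom.pred p x args ∈ φ ∧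
    OutParam R p i ∧ SAtom.argAt (SAtom.pred p x args) i = some (Term.var σ.loc y))

/-! ## Substitutions and renamings -/

/-- A (sort-preserving) substitution. -/
structure Subst (σ : Sig) : Type where
  app : σ.Srt → ℕ → Term σ
  sorted : ∀ s n, Term.sort (app s n) = s

def Term.subst (θ : Subst σ) : Term σ → Term σ
  | .var s n => θ.app s n
  | .cst s c => .cst s c

/-- The index of a variable of sort `loc` (terms of sort `loc` are always
variables, since there are no constants of sort `loc`). -/
def Term.locIdx : Term σ → ℕ
  | .var _ n => n
  | .cst _ _ => 0

def Subst.locApp (θ : Subst σ) (x : ℕ) : ℕ := Term.locIdx (θ.app σ.loc x)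

def SAtom.subst (θ : Subst σ) : SAtom σ → SAtom σ
  | .pto x ts => .pto (θ.locApp x) (ts.map (Term.subst θ))
  | .pred p x args => .pred p (θ.locApp x) (args.map (Term.subst θ))

def PAtom.subst (θ : Subst σ) : PAtom σ → PAtom σ
  | .eq t u => .eq (Term.subst θ t) (Term.subst θ u)
  | .ne t u => .ne (Term.subst θ t) (Term.subst θ u)

def SymHeap.subst (θ : Subst σ) (l : SymHeap σ) : SymHeap σ :=
  ⟨l.sp.map (SAtom.subst θ), l.pu.map (PAtom.subst θ)⟩

/-- `p(t₁,…,tₙ) ⇐_ℜ λ`: `λ` is obtained from the body of a rule of `R` for `p`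
by renaming its non-parameter variables injectively to variables not occurring in
`t₁,…,tₙ`, and substituting each `tᵢ` for the `i`-th parameter. -/
def Unfolds (R : Set (Rule σ)) (p : σ.Pred) (targs : List (Term σ)) (lam : SymHeap σ) : Prop :=
  ∃ r ∈ R, r.head = p ∧ targs.length = σ.arity p ∧
  ∃ θ : Subst σ,
    (∀ (i : ℕ) (hi : i < targs.length),
      θ.app (σ.psort p i) (r.param i) = targs[i]'hi) ∧
    (∀ v : Vr σ, v ∉ Rule.paramVarSet r →
      ∃ m : ℕ, θ.app v.1 v.2 = Term.var v.1 m ∧ ∀ t ∈ targs, (v.1, m) ∉ Term.varSet t) ∧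
    (∀ v w : Vr σ, v ∉ Rule.paramVarSet r → w ∉ Rule.paramVarSet r →
      θ.app v.1 v.2 = θ.app w.1 w.2 → v = w) ∧
    lam = SymHeap.subst θ r.body

/-- Equivalence of symbolic heaps up to an injective renaming of variables fixing
the variables in `F`. -/
def VarRenEquiv (F : Set (Vr σ)) (l1 l2 : SymHeap σ) : Prop :=
  ∃ θ : Subst σ,
    (∀ v : Vr σ, ∃ m : ℕ, θ.app v.1 v.2 = Term.var v.1 m) ∧
    (∀ v w : Vr σ, θ.app v.1 v.2 = θ.app w.1 w.2 → v = w) ∧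
    (∀ v ∈ F, θ.app v.1 v.2 = Term.var v.1 v.2) ∧
    l2 = SymHeap.subst θ l1

/-! ## Interpretations, stores and heaps -/

/-- An interpretation: pairwise disjoint countably infinite universes (one per
sort; disjointness is by construction of `Interp.Val`) together with an injective
interpretation of the constants. -/
structure Interp (σ : Sig) : Type 1 where
  U : σ.Srt → Type
  countable : ∀ s, Countable (U s)
  infinite : ∀ s, Infinite (U s)
  cval : {s : σ.Srt} → σ.Const s → U s
  cval_inj : ∀ s : σ.Srt, Function.Injective (fun c : σ.Const s => cval c)

/-- The universe `𝔘_loc` of locations. -/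
abbrev Interp.Loc {σ : Sig} (I : Interp σ) : Type := I.U σ.loc

/-- The global universe `𝔘` (disjoint union of the sort universes). -/
abbrev Interp.Val {σ : Sig} (I : Interp σ) : Type := Σ s : σ.Srt, I.U s

/-- A store maps every variable to an element of the universe of its sort
(constants are interpreted by `cval`, see `tval`). -/
abbrev Store {σ : Sig} (I : Interp σ) : Type := ∀ s : σ.Srt, ℕ → I.U s

section Stores

variable {I : Interp σ}

/-- The value of a term under a store. -/
def tval (st : Store I) : Term σ → I.Val
  | .var s n => ⟨s, st s n⟩
  | .cst s c => ⟨s, I.cval c⟩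

/-- The value of a term under a store, typed by the sort of the term. -/
def tvalSorted (st : Store I) : (t : Term σ) → I.U (Term.sort t)
  | .var s n => st s n
  | .cst _ c => I.cval c

end Stores

/-- Heaps: finite partial maps from locations to finite tuples of values. -/
def Heap {σ : Sig} (I : Interp σ) : Type :=
  { f : I.Loc → Option (List I.Val) // {l : I.Loc | f l ≠ none}.Finite }

namespace Heap

variable {I : Interp σ}

/-- The domain of a heap (the set of allocated locations). -/
def dom (h : Heap I) : Set I.Loc := {l | h.1 l ≠ none}

/-- The empty heap. -/
def empty (I : Interp σ) : Heap I :=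
  ⟨fun _ => none, by
    have : {l : I.Loc | (none : Option (List I.Val)) ≠ none} = ∅ := by
      ext l; simp
    rw [this]; exact Set.finite_empty⟩

/-- Disjointness of heaps. -/
def Disj (h1 h2 : Heap I) : Prop := dom h1 ∩ dom h2 = ∅

/-- Union of heaps (used on disjoint heaps, where it is the disjoint union `⊎`). -/
def union (h1 h2 : Heap I) : Heap I :=
  ⟨fun l => (h1.1 l).orElse fun _ => h2.1 l, by
    apply (h1.2.union h2.2).subset
    intro l hl
    simp only [Set.mem_setOf_eq] at hl
    simp only [Set.mem_union, Set.mem_setOf_eq]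
    rcases e1 : h1.1 l with _ | vs
    · right
      intro e2
      rw [e1, e2] at hl
      exact hl rfl
    · left
      simp [e1]⟩

/-- The one-point heap `{l ↦ vs}`. -/
noncomputable def single (l : I.Loc) (vs : List I.Val) : Heap I :=
  ⟨fun l' => if l' = l then some vs else none, by
    apply (Set.finite_singleton l).subset
    intro x hx
    simp only [Set.mem_setOf_eq] at hx
    simp only [Set.mem_singleton_iff]
    by_contra hne
    rw [if_neg hne] at hx
    exact hx rfl⟩

/-- `h1 ⊆ h2`: `h2 = h1 ⊎ h3` for some heap `h3` disjoint from `h1`. -/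
def Sub (h1 h2 : Heap I) : Prop := ∃ h3 : Heap I, Disj h1 h3 ∧ h2 = union h1 h3

/-- The relation `ℓ →_h ℓ'`: `ℓ ∈ dom(h)` and `ℓ'` is a component (of sort `loc`)
of the tuple `h(ℓ)`. -/
def conn (h : Heap I) (l l' : I.Loc) : Prop :=
  ∃ vs, h.1 l = some vs ∧ (⟨σ.loc, l'⟩ : I.Val) ∈ vs

/-- `ref(h)`: the set of locations occurring in `h` (allocated or referred to). -/
def ref (h : Heap I) : Set I.Loc :=
  dom h ∪ {l | ∃ l0 vs, h.1 l0 = some vs ∧ (⟨σ.loc, l⟩ : I.Val) ∈ vs}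

end Heap

section PureSem

variable {I : Interp σ}

/-- Satisfaction of a pure atom (depends only on the store). -/
def PAtom.holds (st : Store I) : PAtom σ → Prop
  | .eq t u => tval st t = tval st u
  | .ne t u => tval st t ≠ tval st u

/-- Satisfaction of a pure formula (depends only on the store). -/
def pureHolds (st : Store I) (ξ : PureF σ) : Prop := ∀ a ∈ ξ, PAtom.holds st a

/-- The store `s ∘ σ` mapping every variable `x` to `s(σ(x))`. -/
def Store.comp (st : Store I) (θ : Subst σ) : Store I :=
  fun s n => (θ.sorted s n) ▸ tvalSorted st (θ.app s n)

end PureSem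

/-! ## Satisfaction -/

mutual
  /-- Satisfaction of a single spatial atom; predicate atoms are interpreted by
  unfolding with the rules of `R` (least fixpoint). -/
  inductive SatA (R : Set (Rule σ)) (I : Interp σ) : Store I → Heap I → SAtom σ → Prop where
    | pto (st : Store I) (x : ℕ) (ts : List (Term σ)) :
        SatA R I st (Heap.single (st σ.loc x) (ts.map (tval st))) (SAtom.pto x ts)
    | pred (st : Store I) (h : Heap I) (p : σ.Pred) (x : ℕ) (args : List (Term σ))
        (r : Rule σ) (st' : Store I) :
        r ∈ R → r.head = p →
        tval st' (r.paramTerm 0) = tval st (Term.var σ.loc x) →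
        (∀ (i : ℕ) (hi : i < args.length),
          tval st' (r.paramTerm (i + 1)) = tval st (args[i]'hi)) →
        SatS R I st' h r.body.sp →
        pureHolds st' r.body.pu →
        SatA R I st h (SAtom.pred p x args)

  /-- Satisfaction of a spatial formula: the heap splits into disjoint parts,
  one per atom. -/
  inductive SatS (R : Set (Rule σ)) (I : Interp σ) : Store I → Heap I → Spatial σ → Prop where
    | emp (st : Store I) : SatS R I st (Heap.empty I) 0
    | cons (st : Store I) (h1 h2 : Heap I) (a : SAtom σ) (φ : Spatial σ) :
        SatA R I st h1 a → SatS R I st h2 φ → Heap.Disj h1 h2 →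
        SatS R I st (Heap.union h1 h2) (a ::ₘ φ)
end

/-- Satisfaction `(s,h) ⊨_ℜ φ ⋏ ξ` of a symbolic heap. -/
def SatH (R : Set (Rule σ)) (I : Interp σ) (st : Store I) (h : Heap I) (l : SymHeap σ) : Prop :=
  SatS R I st h l.sp ∧ pureHolds st l.pu

/-! ## Classes of rule sets -/

/-- A deterministic set of rules: two distinct rules with the same head never
overlap (the conjunction of the equations identifying their parameters and
points-to tuples with their pure constraints is unsatisfiable; the two rules
are renamed apart, whence the two independent stores). -/
def Deterministic (R : Set (Rule σ)) (I : Interp σ) : Prop :=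
  ∀ r1 ∈ R, ∀ r2 ∈ R, r1 ≠ r2 → r1.head = r2.head →
  ∀ (ys1 : List (Term σ)) (ps1 : Multiset (SAtom σ))
    (ys2 : List (Term σ)) (ps2 : Multiset (SAtom σ)),
    r1.body.sp = (SAtom.pto (r1.param 0) ys1) ::ₘ ps1 →
    r2.body.sp = (SAtom.pto (r2.param 0) ys2) ::ₘ ps2 →
    ¬ ∃ st1 st2 : Store I,
      (∀ i < σ.arity r1.head, tval st1 (r1.paramTerm i) = tval st2 (r2.paramTerm i)) ∧
      ys1.map (tval st1) = ys2.map (tval st2) ∧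
      pureHolds st1 r1.body.pu ∧ pureHolds st2 r2.body.pu

/-- The standing hypotheses: `R` is a nonempty loc-deterministic set of P-rules
satisfying Assumptions 1 (every predicate is productive) and 2 (every loc-sorted
parameter index `i ≥ 2`, here 0-indexed `i ≥ 1`, is an outgoing parameter index),
in which every constant occurs. -/
structure GoodRules (R : Set (Rule σ)) (I : Interp σ) : Prop where
  nonempty : R.Nonempty
  prules : ∀ r ∈ R, Rule.IsPRule r
  deterministic : Deterministic R I
  loc_diseq : ∀ r ∈ R, ∀ pa ∈ r.body.pu,
    ∃ x y : ℕ, pa = PAtom.ne (Term.var σ.loc x) (Term.var σ.loc y)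
  productive : ∀ p : σ.Pred, Productive R p
  out_total : ∀ (p : σ.Pred) (i : ℕ), 1 ≤ i → i < σ.arity p → σ.psort p i = σ.loc →
    OutParam R p i
  const_occurs : ∀ (s : σ.Srt) (c : σ.Const s), ∃ r ∈ R, Term.cst s c ∈ Rule.termSet r

/-! ## Sequents -/

/-- A sequent `λ ⊢_ℜ^V γ`. -/
structure Sequent (σ : Sig) : Type where
  lhs : SymHeap σ
  rhs : SymHeap σ
  V : Multiset ℕ

/-- A store is injective on a multiset `V` of loc-variables:
`{x,y} ⊆ₘ V → s(x) ≠ s(y)`. -/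
def StoreInjOn {I : Interp σ} (st : Store I) (V : Multiset ℕ) : Prop :=
  ∀ x y : ℕ, ({x, y} : Multiset ℕ) ≤ V → st σ.loc x ≠ st σ.loc y

/-- A counter-model of a sequent. -/
def CounterModel (R : Set (Rule σ)) (I : Interp σ) (S : Sequent σ)
    (st : Store I) (h : Heap I) : Prop :=
  SatH R I st h S.lhs ∧ ¬ SatH R I st h S.rhs ∧
  (∀ x ∈ S.V, st σ.loc x ∉ Heap.dom h) ∧ StoreInjOn st S.V

/-- Validity of a sequent: no counter-model. -/
def SeqValid (R : Set (Rule σ)) (I : Interp σ) (S : Sequent σ) : Prop :=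
  ¬ ∃ (st : Store I) (h : Heap I), CounterModel R I S st h

/-- Axioms (modulo AC): `φ ⋏ (ξ ∧ ξ') ⊢ φ ⋏ ξ`; `φ ⋏ (ξ ∧ x ≉ x) ⊢ γ`;
a heap-unsatisfiable left-hand side; an allocated variable in `V`, or a
repeated variable in `V`. -/
def IsAxiom (S : Sequent σ) : Prop :=
  (S.lhs.sp = S.rhs.sp ∧ ∀ a ∈ S.rhs.pu, a ∈ S.lhs.pu) ∨
  (∃ v : Vr σ, PAtom.ne (Term.var v.1 v.2) (Term.var v.1 v.2) ∈ S.lhs.pu) ∨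
  (¬ (alloc S.lhs.sp).Nodup) ∨
  (∃ x ∈ alloc S.lhs.sp, x ∈ S.V) ∨
  (¬ S.V.Nodup)

/-- The relation `λ ▷_V ξ` (Definition of `▷`). -/
def Entails (lam : SymHeap σ) (V : Multiset ℕ) (ξ : PureF σ) : Prop :=
  ∀ ζ ∈ ξ,
    ζ ∈ lam.pu ∨
    (∃ v : Vr σ, ζ = PAtom.eq (Term.var v.1 v.2) (Term.var v.1 v.2)) ∨
    (∃ (s1 : σ.Srt) (c1 : σ.Const s1) (s2 : σ.Srt) (c2 : σ.Const s2),
      ζ = PAtom.ne (Term.cst s1 c1) (Term.cst s2 c2) ∧ Term.cst s1 c1 ≠ Term.cst s2 c2) ∨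
    (∃ x1 x2 : ℕ, ζ = PAtom.ne (Term.var σ.loc x1) (Term.var σ.loc x2) ∧
      ({x1, x2} : Multiset ℕ) ≤ SymHeap.alloc lam + V)

/-- A `→`-compatible model of a spatial formula. -/
def PathCompatible (R : Set (Rule σ)) (I : Interp σ) (st : Store I) (h : Heap I)
    (φ : Spatial σ) : Prop :=
  SatS R I st h φ ∧
  ∀ x y : ℕ, Relation.ReflTransGen (Heap.conn h) (st σ.loc x) (st σ.loc y) →
    Relation.ReflTransGen (PathTo R φ) x y

/-! ## 𝔘-mappings -/

/-- A `𝔘`-mapping: a sort-preserving map on the universe fixing the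
interpretations of constants. -/
structure UMap {σ : Sig} (I : Interp σ) : Type where
  f : ∀ s : σ.Srt, I.U s → I.U s
  fix_const : ∀ (s : σ.Srt) (c : σ.Const s), f s (I.cval c) = I.cval c

/-- A `𝔘`-mapping, as a map on `𝔘`. -/
def UMap.onVal {σ : Sig} {I : Interp σ} (ν : UMap I) : I.Val → I.Val :=
  fun v => ⟨v.1, ν.f v.1 v.2⟩

/-- The store `ν ∘ s`. -/
def UMap.compStore {σ : Sig} {I : Interp σ} (ν : UMap I) (st : Store I) : Store I :=
  fun s n => ν.f s (st s n)

/-! The same store is a counter-model of both sequents: on a model `(s, h)` of the left-hand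
side the two right-hand sides hold together. Under `s ∘ σ` the unfolding of `p(x, z⃗)` reads
`x ↦ (y⃗) * ψ'σ`, and its pure part `ζ'σ` holds by (iv). Conversely, any unfolding of
`p(x, z⃗)` inside `h` stores `s(y⃗)` at `s(x)`, so by determinism it uses the same rule; the
arguments of its predicate atoms are parameters, components of that tuple or constants, so
they are satisfied under `s ∘ σ` as well. -/

namespace Heap

variable {I : Interp σ}

lemma union_val_of_eq_some {h1 : Heap I} (h2 : Heap I) {l : I.Loc} {vs : List I.Val}
    (h : h1.1 l = some vs) : (union h1 h2).1 l = some vs := by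
  simp [union, h, Option.orElse]

lemma dom_union (h1 h2 : Heap I) : dom (union h1 h2) = dom h1 ∪ dom h2 := by
  ext l
  simp only [dom, union, Set.mem_ofPred_eq, Set.mem_union]
  rcases h1.1 l with _ | vs <;> simp [Option.orElse]

lemma mem_dom_of_eq_some {h : Heap I} {l : I.Loc} {vs : List I.Val} (e : h.1 l = some vs) :
    l ∈ dom h := by
  simp [dom, e]

lemma single_val_self (l : I.Loc) (vs : List I.Val) : (single l vs).1 l = some vs := by
  simp [single]

lemma disj_iff {h1 h2 : Heap I} : Disj h1 h2 ↔ ∀ l ∈ dom h1, l ∉ dom h2 := by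
  simp only [Disj, Set.eq_empty_iff_forall_notMem, Set.mem_inter_iff, not_and]

lemma Disj.symm {h1 h2 : Heap I} (h : Disj h1 h2) : Disj h2 h1 := by
  rwa [Disj, Set.inter_comm]

lemma union_assoc (h1 h2 h3 : Heap I) :
    union (union h1 h2) h3 = union h1 (union h2 h3) := by
  apply Subtype.ext; funext l
  simp only [union]
  rcases h1.1 l with _ | vs <;> simp [Option.orElse]

lemma union_comm {h1 h2 : Heap I} (h : Disj h1 h2) : union h1 h2 = union h2 h1 := by
  rw [disj_iff] at h
  apply Subtype.ext; funext l
  simp only [union]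
  rcases e1 : h1.1 l with _ | vs1 <;> rcases e2 : h2.1 l with _ | vs2 <;>
    simp only [Option.orElse]
  exact absurd (mem_dom_of_eq_some e2) (h l (mem_dom_of_eq_some e1))

lemma disj_union_iff {h1 h2 h3 : Heap I} :
    Disj h1 (union h2 h3) ↔ Disj h1 h2 ∧ Disj h1 h3 := by
  simp only [disj_iff, dom_union, Set.mem_union, not_or, imp_and, forall_and]

lemma union_disj_iff {h1 h2 h3 : Heap I} :
    Disj (union h1 h2) h3 ↔ Disj h1 h3 ∧ Disj h2 h3 :=
  ⟨fun h => (disj_union_iff.mp h.symm).imp Disj.symm Disj.symm,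
    fun h => (disj_union_iff.mpr ⟨h.1.symm, h.2.symm⟩).symm⟩

lemma empty_disj (h : Heap I) : Disj (empty I) h :=
  disj_iff.mpr fun _ hl => absurd rfl hl

end Heap

section Substitution

variable {I : Interp σ}

lemma tval_comp (st : Store I) (θ : Subst σ) (t : Term σ) :
    tval (st.comp θ) t = tval st (t.subst θ) := by
  cases t with
  | var s n =>
    show (⟨s, st.comp θ s n⟩ : I.Val) = tval st (θ.app s n)
    have cast_eq : ∀ (u : Term σ) (e : u.sort = s),
        (⟨s, e ▸ tvalSorted st u⟩ : I.Val) = tval st u := by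
      rintro u rfl; cases u <;> rfl
    exact cast_eq _ _
  | cst s c => rfl

lemma Subst.app_loc (θ : Subst σ) (x : ℕ) :
    θ.app σ.loc x = Term.var σ.loc (θ.locApp x) := by
  have hsort := θ.sorted σ.loc x
  unfold Subst.locApp
  cases e : θ.app σ.loc x with
  | var s n => rw [e] at hsort; cases hsort; rfl
  | cst s c => rw [e] at hsort; cases hsort; exact σ.noLocConst.elim c

lemma Store.comp_loc (st : Store I) (θ : Subst σ) (x : ℕ) :
    st.comp θ σ.loc x = st σ.loc (θ.locApp x) :=
  sigma_mk_injective <|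
    (tval_comp st θ (Term.var σ.loc x)).trans (by rw [Term.subst, θ.app_loc]; rfl)

lemma pureHolds_map_subst (st : Store I) (θ : Subst σ) (χ : PureF σ) :
    pureHolds st (χ.map (PAtom.subst θ)) ↔ pureHolds (st.comp θ) χ := by
  have holds_subst : ∀ a : PAtom σ, (a.subst θ).holds st ↔ a.holds (st.comp θ) := by
    rintro (⟨t, u⟩ | ⟨t, u⟩) <;> simp only [PAtom.subst, PAtom.holds, tval_comp]
  simp only [pureHolds, Multiset.forall_mem_map_iff, holds_subst]

end Substitution

section Satisfaction

variable {I : Interp σ} {R : Set (Rule σ)}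

lemma satA_pto_iff {st : Store I} {hh : Heap I} {x : ℕ} {ts : List (Term σ)} :
    SatA R I st hh (SAtom.pto x ts) ↔ hh = Heap.single (st σ.loc x) (ts.map (tval st)) :=
  ⟨fun h => by cases h; rfl, fun h => h ▸ SatA.pto st x ts⟩

lemma satA_pred_iff {st : Store I} {hh : Heap I} {p : σ.Pred} {x : ℕ} {args : List (Term σ)} :
    SatA R I st hh (SAtom.pred p x args) ↔ ∃ r ∈ R, r.head = p ∧ ∃ st' : Store I,
      tval st' (r.paramTerm 0) = tval st (Term.var σ.loc x) ∧
      (∀ (i : ℕ) (hi : i < args.length),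
        tval st' (r.paramTerm (i + 1)) = tval st (args[i]'hi)) ∧
      SatS R I st' hh r.body.sp ∧ pureHolds st' r.body.pu := by
  constructor
  · intro h
    cases h with
    | pred _ _ _ _ _ r st' hr hhead h0 hargs hS hpu =>
      exact ⟨r, hr, hhead, st', h0, hargs, hS, hpu⟩
  · rintro ⟨r, hr, hhead, st', h0, hargs, hS, hpu⟩
    exact SatA.pred st hh p x args r st' hr hhead h0 hargs hS hpu

lemma satS_zero_iff {st : Store I} {hh : Heap I} : SatS R I st hh 0 ↔ hh = Heap.empty I := by
  constructor
  · intro h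
    generalize hm : (0 : Spatial σ) = m at h
    cases h with
    | emp => rfl
    | cons => exact absurd hm.symm Multiset.cons_ne_zero
  · rintro rfl; exact SatS.emp st

-- A derivation of `SatS` may split the atoms off in any order, whence the strong induction.
lemma SatS.of_mem {st : Store I} {hh : Heap I} {m : Spatial σ} {a : SAtom σ}
    (hsat : SatS R I st hh m) (ha : a ∈ m) :
    ∃ h1 h2, Heap.Disj h1 h2 ∧ hh = Heap.union h1 h2 ∧
      SatA R I st h1 a ∧ SatS R I st h2 (m.erase a) := by
  induction m using Multiset.strongInductionOn generalizing hh with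
  | ih m IH =>
    cases hsat with
    | emp => simp at ha
    | cons st h1 h2 b m' hA hS hD =>
      by_cases e : b = a
      · subst e
        exact ⟨h1, h2, hD, rfl, hA, by rwa [Multiset.erase_cons_head]⟩
      · have ha' : a ∈ m' := (Multiset.mem_cons.mp ha).resolve_left (Ne.symm e)
        obtain ⟨h21, h22, d, rfl, sA, sS⟩ := IH m' (Multiset.lt_cons_self m' b) hS ha'
        rw [Heap.disj_union_iff] at hD
        refine ⟨h21, Heap.union h1 h22, Heap.disj_union_iff.mpr ⟨hD.1.symm, d⟩, ?_, sA, ?_⟩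
        · rw [← Heap.union_assoc, Heap.union_comm hD.1, Heap.union_assoc]
        · rw [Multiset.erase_cons_tail_of_mem ha']
          exact SatS.cons st h1 h22 b _ hA sS hD.2

lemma satS_cons_iff {st : Store I} {hh : Heap I} {a : SAtom σ} {m : Spatial σ} :
    SatS R I st hh (a ::ₘ m) ↔ ∃ h1 h2, Heap.Disj h1 h2 ∧ hh = Heap.union h1 h2 ∧
      SatA R I st h1 a ∧ SatS R I st h2 m := by
  constructor
  · intro h
    simpa only [Multiset.erase_cons_head] using h.of_mem (Multiset.mem_cons_self a m)
  · rintro ⟨h1, h2, d, rfl, hA, hS⟩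
    exact SatS.cons st h1 h2 a m hA hS d

lemma satS_add_iff {st : Store I} {hh : Heap I} {m1 m2 : Spatial σ} :
    SatS R I st hh (m1 + m2) ↔ ∃ h1 h2, Heap.Disj h1 h2 ∧ hh = Heap.union h1 h2 ∧
      SatS R I st h1 m1 ∧ SatS R I st h2 m2 := by
  induction m1 using Multiset.induction generalizing hh with
  | empty =>
    simp only [zero_add, satS_zero_iff]
    exact ⟨fun h => ⟨_, hh, Heap.empty_disj hh, rfl, rfl, h⟩,
      by rintro ⟨_, h2, -, rfl, rfl, h⟩; exact h⟩
  | cons a m1 IH =>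
    simp only [Multiset.cons_add, satS_cons_iff, IH]
    constructor
    · rintro ⟨h1, _, d, rfl, hA, h21, h22, d2, rfl, s1, s2⟩
      rw [Heap.disj_union_iff] at d
      exact ⟨Heap.union h1 h21, h22, Heap.union_disj_iff.mpr ⟨d.2, d2⟩,
        (Heap.union_assoc ..).symm, ⟨h1, h21, d.1, rfl, hA, s1⟩, s2⟩
    · rintro ⟨_, h22, d, rfl, ⟨h1, h21, d1, rfl, hA, s1⟩, s2⟩
      rw [Heap.union_disj_iff] at d
      exact ⟨h1, Heap.union h21 h22, Heap.disj_union_iff.mpr ⟨d1, d.1⟩,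
        Heap.union_assoc .., hA, h21, h22, d.2, rfl, s1, s2⟩

lemma satS_cons_iff_add {st : Store I} {hh : Heap I} {a : SAtom σ} {m ψ : Spatial σ}
    (H : ∀ h1 h2, Heap.Disj h1 h2 → hh = Heap.union h1 h2 →
      (SatA R I st h1 a ↔ SatS R I st h1 m)) :
    SatS R I st hh (a ::ₘ ψ) ↔ SatS R I st hh (m + ψ) := by
  rw [satS_cons_iff, satS_add_iff]
  refine exists₂_congr fun h1 h2 => ⟨?_, ?_⟩ <;> rintro ⟨d, e, h1sat, h2sat⟩
  exacts [⟨d, e, (H h1 h2 d e).mp h1sat, h2sat⟩, ⟨d, e, (H h1 h2 d e).mpr h1sat, h2sat⟩]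

lemma satS_pto_cons_val {st : Store I} {hh : Heap I} {x : ℕ} {ts : List (Term σ)}
    {m : Spatial σ} (h : SatS R I st hh (SAtom.pto x ts ::ₘ m)) :
    hh.1 (st σ.loc x) = some (ts.map (tval st)) := by
  obtain ⟨h1, h2, -, rfl, hA, -⟩ := satS_cons_iff.mp h
  rw [satA_pto_iff.mp hA]
  exact Heap.union_val_of_eq_some _ (Heap.single_val_self _ _)

lemma Rule.store_param_zero_eq {r : Rule σ} {st' st : Store I} {x : ℕ}
    (h : tval st' (r.paramTerm 0) = tval st (Term.var σ.loc x)) :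
    st' σ.loc (r.param 0) = st σ.loc x :=
  sigma_mk_injective (by simpa only [Rule.paramTerm, σ.psort_zero, tval] using h)

lemma satA_map_subst {st : Store I} {θ : Subst σ} {hh : Heap I} {a : SAtom σ} :
    SatA R I st hh (a.subst θ) ↔ SatA R I (st.comp θ) hh a := by
  have hroot : ∀ x,
      tval st (Term.var σ.loc (θ.locApp x)) = tval (st.comp θ) (Term.var σ.loc x) :=
    fun x => by rw [tval_comp, Term.subst, θ.app_loc]
  cases a with
  | pto x ts =>
    simp only [SAtom.subst, satA_pto_iff, Store.comp_loc, List.map_map]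
    rw [show tval st ∘ Term.subst θ = tval (st.comp θ) from
      funext fun t => (tval_comp st θ t).symm]
  | pred p x args =>
    simp only [SAtom.subst, satA_pred_iff, hroot, List.length_map, List.getElem_map, tval_comp]

lemma satS_map_subst {st : Store I} {θ : Subst σ} {hh : Heap I} {m : Spatial σ} :
    SatS R I st hh (m.map (SAtom.subst θ)) ↔ SatS R I (st.comp θ) hh m := by
  induction m using Multiset.induction generalizing hh with
  | empty => simp only [Multiset.map_zero, satS_zero_iff]
  | cons a m IH => simp only [Multiset.map_cons, satS_cons_iff, satA_map_subst, IH]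

lemma satA_congr {st1 st2 : Store I} {hh : Heap I} {a : SAtom σ}
    (hagree : ∀ t ∈ a.termSet, tval st1 t = tval st2 t) (h : SatA R I st1 hh a) :
    SatA R I st2 hh a := by
  cases a with
  | pto x ts =>
    have hx : st1 σ.loc x = st2 σ.loc x :=
      sigma_mk_injective (hagree _ (Set.mem_insert _ _))
    have hts : ts.map (tval st1) = ts.map (tval st2) :=
      List.map_inj_left.mpr fun t ht => hagree t (Set.mem_insert_of_mem _ ht)
    rw [satA_pto_iff] at h ⊢
    rw [h, hx, hts]
  | pred p x args =>
    obtain ⟨r, hr, hhead, st', h0, hargs, hS, hpu⟩ := satA_pred_iff.mp h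
    refine satA_pred_iff.mpr ⟨r, hr, hhead, st', h0.trans (hagree _ (Set.mem_insert _ _)),
      fun i hi => (hargs i hi).trans (hagree _ (Set.mem_insert_of_mem _ ?_)), hS, hpu⟩
    exact List.getElem_mem hi

lemma satS_congr {st1 st2 : Store I} {hh : Heap I} {m : Spatial σ}
    (hagree : ∀ a ∈ m, ∀ t ∈ a.termSet, tval st1 t = tval st2 t) (h : SatS R I st1 hh m) :
    SatS R I st2 hh m := by
  induction m using Multiset.induction generalizing hh with
  | empty => rwa [satS_zero_iff] at h ⊢
  | cons a m IH =>
    obtain ⟨h1, h2, d, rfl, hA, hS⟩ := satS_cons_iff.mp h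
    exact satS_cons_iff.mpr ⟨h1, h2, d, rfl,
      satA_congr (hagree a (Multiset.mem_cons_self a m)) hA,
      IH (fun b hb => hagree b (Multiset.mem_cons_of_mem hb)) hS⟩

end Satisfaction

section PRules

variable {I : Interp σ} {R : Set (Rule σ)}

def SAtom.IsPred (a : SAtom σ) : Prop :=
  ∃ (q : σ.Pred) (z : ℕ) (args : List (Term σ)), a = .pred q z args

lemma SAtom.IsPred.subst {a : SAtom σ} (h : a.IsPred) (θ : Subst σ) : (a.subst θ).IsPred := by
  obtain ⟨q, z, args, rfl⟩ := h
  exact ⟨q, _, _, rfl⟩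

lemma pto_cons_inj {x x' : ℕ} {ts ts' : List (Term σ)} {m ps : Spatial σ}
    (hps : ∀ a ∈ ps, a.IsPred) (h : SAtom.pto x ts ::ₘ m = SAtom.pto x' ts' ::ₘ ps) :
    x = x' ∧ ts = ts' ∧ m = ps := by
  rcases Multiset.cons_eq_cons.mp h with ⟨hpto, hm⟩ | ⟨-, cs, -, hps_eq⟩
  · cases hpto; exact ⟨rfl, rfl, hm⟩
  · obtain ⟨q, z, args, hq⟩ := hps _ (hps_eq ▸ Multiset.mem_cons_self _ _)
    cases hq

/-- Every term of the body of a P-rule is a parameter, a component of the points-to tuple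
or a constant. -/
lemma Rule.IsPRule.satS_body_congr {r : Rule σ} (hr : r.IsPRule) {ys : List (Term σ)}
    {ps : Spatial σ} (hsp : r.body.sp = SAtom.pto (r.param 0) ys ::ₘ ps) {st1 st2 : Store I}
    {hh : Heap I}
    (hpar : ∀ i < σ.arity r.head, tval st1 (r.paramTerm i) = tval st2 (r.paramTerm i))
    (hys : ys.map (tval st1) = ys.map (tval st2)) (h : SatS R I st1 hh r.body.sp) :
    SatS R I st2 hh r.body.sp := by
  obtain ⟨ys', ps', hsp', hps', -, hroots, -, hargs⟩ := hr
  obtain ⟨-, rfl, rfl⟩ := pto_cons_inj hps' (hsp.symm.trans hsp')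
  have hterm : ∀ t,
      t ∈ r.paramTermSet ∨ t ∈ ys ∨ (∃ (s : σ.Srt) (c : σ.Const s), t = .cst s c) →
      tval st1 t = tval st2 t := by
    rintro t (⟨i, hi, rfl⟩ | ht | ⟨s, c, rfl⟩)
    exacts [hpar i hi, List.map_inj_left.mp hys t ht, rfl]
  refine satS_congr (fun a ha t ht => hterm t ?_) h
  rw [hsp] at ha
  rcases Multiset.mem_cons.mp ha with rfl | ha
  · rcases ht with rfl | ht
    · exact .inl ⟨0, σ.arity_pos _, by rw [Rule.paramTerm, σ.psort_zero]⟩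
    · exact .inr (.inl ht)
  · obtain ⟨q, z, args, rfl⟩ := hps' a ha
    rcases ht with rfl | ht
    · have hz : Term.var σ.loc z ∈ {t : Term σ | ∃ a ∈ ps, t = Term.var σ.loc a.root} :=
        ⟨_, ha, rfl⟩
      rw [hroots] at hz
      exact .inr (.inl hz.1)
    · exact hargs _ ha q z args rfl t ht

/-- By determinism, no rule other than `r` can unfold the atom in a heap that stores the tuple
of `r` at the root. -/
lemma satA_pred_iff_satS_body (hPR : ∀ r ∈ R, r.IsPRule) (hdet : Deterministic R I)
    {r : Rule σ} (hr : r ∈ R) {p : σ.Pred} (hhead : r.head = p) {ys : List (Term σ)}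
    {ps : Spatial σ} (hsp : r.body.sp = SAtom.pto (r.param 0) ys ::ₘ ps) {x : ℕ}
    {args : List (Term σ)} (hlen : args.length + 1 = σ.arity p) {st ST : Store I} {hh : Heap I}
    (hpar : ∀ (i : ℕ) (hi : i < args.length + 1),
      tval ST (r.paramTerm i) = tval st ((Term.var σ.loc x :: args)[i]'hi))
    (hpu : pureHolds ST r.body.pu)
    (hval : ∀ vs, hh.1 (st σ.loc x) = some vs → vs = ys.map (tval ST)) :
    SatA R I st hh (SAtom.pred p x args) ↔ SatS R I ST hh r.body.sp := by
  refine ⟨fun h => ?_, fun h => satA_pred_iff.mpr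
    ⟨r, hr, hhead, ST, hpar 0 (Nat.succ_pos _), fun i hi => hpar (i + 1) (Nat.succ_lt_succ hi),
      h, hpu⟩⟩
  obtain ⟨r', hr', hhead', st', h0, hargs, hS, hpu'⟩ := satA_pred_iff.mp h
  obtain ⟨ys', ps', hsp', hps', -⟩ := hPR r' hr'
  have hpar' : ∀ (i : ℕ) (hi : i < args.length + 1),
      tval st' (r'.paramTerm i) = tval st ((Term.var σ.loc x :: args)[i]'hi) := by
    rintro (_ | i) hi
    exacts [h0, hargs i (Nat.lt_of_succ_lt_succ hi)]
  have hys : ys'.map (tval st') = ys.map (tval ST) :=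
    hval _ (Rule.store_param_zero_eq h0 ▸ satS_pto_cons_val (hsp' ▸ hS))
  have hagree : ∀ i < σ.arity r'.head,
      tval st' (r'.paramTerm i) = tval ST (r.paramTerm i) := fun i hi =>
    have hi' : i < args.length + 1 := by rwa [hlen, ← hhead']
    (hpar' i hi').trans (hpar i hi').symm
  obtain rfl : r' = r := by
    by_contra hne
    exact hdet r' hr' r hr hne (hhead'.trans hhead.symm) ys' ps' ys ps hsp' hsp
      ⟨st', ST, hagree, hys, hpu', hpu⟩
  obtain ⟨-, rfl, -⟩ := pto_cons_inj hps' (hsp.symm.trans hsp')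
  exact (hPR r' hr').satS_body_congr hsp hagree hys hS

lemma Unfolds.satA_pred_iff (hPR : ∀ r ∈ R, r.IsPRule) (hdet : Deterministic R I) {p : σ.Pred}
    {x : ℕ} {args us : List (Term σ)} {ψ' : Spatial σ} {ζ' : PureF σ}
    (hunf : Unfolds R p (Term.var σ.loc x :: args) ⟨SAtom.pto x us ::ₘ ψ', ζ'⟩)
    {st st' : Store I} {hh : Heap I}
    (hargs : ∀ t ∈ Term.var σ.loc x :: args, tval st' t = tval st t) (hpu : pureHolds st' ζ')
    (hval : ∀ vs, hh.1 (st σ.loc x) = some vs → vs = us.map (tval st')) :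
    SatA R I st hh (SAtom.pred p x args) ↔ SatS R I st' hh (SAtom.pto x us ::ₘ ψ') := by
  obtain ⟨r, hr, hhead, hlen, ρ, hρ, -, -, hbody⟩ := hunf
  obtain ⟨ys, ps, hsp, hps, -⟩ := hPR r hr
  simp only [SymHeap.subst, SymHeap.mk.injEq] at hbody
  obtain ⟨hsp_eq, hpu_eq⟩ := hbody
  rw [hsp, Multiset.map_cons] at hsp_eq
  have hps_subst : ∀ a ∈ ps.map (SAtom.subst ρ), a.IsPred := by
    simp only [Multiset.forall_mem_map_iff]
    exact fun a ha => SAtom.IsPred.subst (hps a ha) ρ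
  obtain ⟨-, hus, -⟩ := pto_cons_inj hps_subst hsp_eq
  rw [hsp_eq, ← Multiset.map_cons, ← hsp, satS_map_subst]
  refine satA_pred_iff_satS_body hPR hdet hr hhead hsp hlen (fun i hi => ?_)
    ((pureHolds_map_subst st' ρ _).mp (hpu_eq ▸ hpu)) (fun vs hvs => ?_)
  · rw [Rule.paramTerm, hhead, tval_comp]
    exact (congrArg (tval st') (hρ i hi)).trans (hargs _ (List.getElem_mem hi))
  · rw [hval vs hvs, hus, List.map_map]
    exact List.map_congr_left fun t _ => (tval_comp st' ρ t).symm

end PRules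

section Entailment

variable {I : Interp σ} {R : Set (Rule σ)}

lemma satA_root_mem_dom (hPR : ∀ r ∈ R, r.IsPRule) {st : Store I} {hh : Heap I}
    {a : SAtom σ} (h : SatA R I st hh a) : st σ.loc a.root ∈ Heap.dom hh := by
  cases a with
  | pto x ts =>
    rw [satA_pto_iff.mp h]
    exact Heap.mem_dom_of_eq_some (Heap.single_val_self _ _)
  | pred p x args =>
    obtain ⟨r, hr, -, st', h0, -, hS, -⟩ := satA_pred_iff.mp h
    obtain ⟨ys, ps, hsp, -⟩ := hPR r hr
    exact Heap.mem_dom_of_eq_some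
      (Rule.store_param_zero_eq h0 ▸ satS_pto_cons_val (hsp ▸ hS))

lemma SatS.alloc_nodup_mem_dom (hPR : ∀ r ∈ R, r.IsPRule) {st : Store I} {hh : Heap I}
    {m : Spatial σ} (h : SatS R I st hh m) :
    ((alloc m).map (st σ.loc)).Nodup ∧ ∀ x ∈ alloc m, st σ.loc x ∈ Heap.dom hh := by
  induction m using Multiset.induction generalizing hh with
  | empty => simp [alloc]
  | cons a m IH =>
    obtain ⟨h1, h2, d, rfl, hA, hS⟩ := satS_cons_iff.mp h
    obtain ⟨hnd, hdom⟩ := IH hS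
    have hroot := satA_root_mem_dom hPR hA
    simp only [alloc, Multiset.map_cons, Multiset.nodup_cons, Multiset.mem_cons,
      forall_eq_or_imp, Heap.dom_union, Set.mem_union] at hnd hdom ⊢
    refine ⟨⟨fun hmem => ?_, hnd⟩, .inl hroot, fun x hx => .inr (hdom x hx)⟩
    obtain ⟨y, hy, hxy⟩ := Multiset.mem_map.mp hmem
    exact Heap.disj_iff.mp d _ hroot (hxy ▸ hdom y hy)

lemma StoreInjOn.map_nodup {st : Store I} {V : Multiset ℕ} (h : StoreInjOn st V) :
    (V.map (st σ.loc)).Nodup := by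
  induction V using Multiset.induction with
  | empty => simp
  | cons a V IH =>
    rw [Multiset.map_cons, Multiset.nodup_cons]
    refine ⟨fun hmem => ?_, IH fun x y hxy => h x y (hxy.trans (Multiset.le_cons_self V a))⟩
    obtain ⟨y, hy, hya⟩ := Multiset.mem_map.mp hmem
    exact h a y (Multiset.cons_le_cons a (Multiset.singleton_le.mpr hy)) hya.symm

lemma alloc_add_map_nodup (hPR : ∀ r ∈ R, r.IsPRule) {st : Store I} {hh : Heap I}
    {m : Spatial σ} {V : Multiset ℕ} (h : SatS R I st hh m)
    (hV : ∀ x ∈ V, st σ.loc x ∉ Heap.dom hh) (hinj : StoreInjOn st V) :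
    ((alloc m + V).map (st σ.loc)).Nodup := by
  obtain ⟨hnd, hdom⟩ := h.alloc_nodup_mem_dom hPR
  rw [Multiset.map_add, Multiset.nodup_add]
  refine ⟨hnd, hinj.map_nodup, Multiset.disjoint_left.mpr fun hl hl' => ?_⟩
  obtain ⟨x, hx, rfl⟩ := Multiset.mem_map.mp hl
  obtain ⟨y, hy, hyx⟩ := Multiset.mem_map.mp hl'
  exact hV y hy (hyx ▸ hdom x hx)

lemma Entails.pureHolds (hPR : ∀ r ∈ R, r.IsPRule) {lam : SymHeap σ} {V : Multiset ℕ}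
    {χ : PureF σ} (hent : Entails lam V χ) {st : Store I} {hh : Heap I}
    (hsat : SatH R I st hh lam) (hV : ∀ x ∈ V, st σ.loc x ∉ Heap.dom hh)
    (hinj : StoreInjOn st V) : pureHolds st χ := by
  intro a ha
  rcases hent a ha with hin | ⟨v, rfl⟩ | ⟨s1, c1, s2, c2, rfl, hne⟩ | ⟨x1, x2, rfl, hle⟩
  · exact hsat.2 a hin
  · exact rfl
  · intro he
    obtain ⟨rfl, hc⟩ := Sigma.mk.inj_iff.mp he
    rw [I.cval_inj s1 (eq_of_heq hc)] at hne
    exact hne rfl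
  · have hnd := Multiset.nodup_of_le (Multiset.map_le_map (f := st σ.loc) hle)
      (alloc_add_map_nodup hPR hsat.1 hV hinj)
    simp only [Multiset.insert_eq_cons, Multiset.map_cons, Multiset.map_singleton,
      Multiset.nodup_cons, Multiset.mem_singleton] at hnd
    exact fun he => hnd.1 (sigma_mk_injective he)

end Entailment

lemma counterModel_iff_of_satH_iff {I : Interp σ} {R : Set (Rule σ)} {lam γ1 γ2 : SymHeap σ}
    {V : Multiset ℕ} {st : Store I} {hh : Heap I}
    (H : SatH R I st hh lam → (∀ x ∈ V, st σ.loc x ∉ Heap.dom hh) → StoreInjOn st V →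
      (SatH R I st hh γ1 ↔ SatH R I st hh γ2)) :
    CounterModel R I ⟨lam, γ1, V⟩ st hh ↔ CounterModel R I ⟨lam, γ2, V⟩ st hh := by
  simp only [CounterModel]
  exact ⟨fun ⟨hl, hn, hd, hi⟩ => ⟨hl, (H hl hd hi).not.mp hn, hd, hi⟩,
    fun ⟨hl, hn, hd, hi⟩ => ⟨hl, (H hl hd hi).not.mpr hn, hd, hi⟩⟩

/-- soundness and invertibility of the imitation rule I: under the
side conditions (i)-(iv), for every heap `h` the conclusion has a counter-model
`(s,h)` iff the premise has a counter-model `(s',h)`. -/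
theorem STATEMENT_18 {σ : Sig} {I : Interp σ} (R : Set (Rule σ)) (hR : GoodRules R I)
    (x : ℕ) (ys : List (Term σ)) (φ : Spatial σ) (ξ : PureF σ)
    (p : σ.Pred) (zs : List (Term σ)) (ψ : Spatial σ) (ζ : PureF σ) (V : Multiset ℕ)
    (us : List (Term σ)) (ψ' : Spatial σ) (ζ' : PureF σ)
    (θ : Subst σ)
    -- (i) `p(x,z⃗) ⇐_ℜ (x ↦ (u₁,…,uₖ) * ψ') ⋏ ζ'`
    (hunf : Unfolds R p (Term.var σ.loc x :: zs) ⟨(SAtom.pto x us) ::ₘ ψ', ζ'⟩)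
    -- (ii) `dom(σ) ⊆ {u₁,…,uₖ} ∖ ({x} ∪ z⃗)`
    (hdom : ∀ v : Vr σ, θ.app v.1 v.2 ≠ Term.var v.1 v.2 →
      Term.var v.1 v.2 ∈ us ∧ Term.var v.1 v.2 ≠ Term.var σ.loc x ∧
        Term.var v.1 v.2 ∉ zs)
    -- (iii) `uᵢσ = yᵢ` for all `i`
    (happ : us.map (Term.subst θ) = ys)
    -- (iv) `(x ↦ (y₁,…,yₖ) * φ) ⋏ ξ ▷_V ζ'σ`
    (hent : Entails ⟨(SAtom.pto x ys) ::ₘ φ, ξ⟩ V (ζ'.map (PAtom.subst θ))) :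
    ∀ h : Heap I,
      (∃ st : Store I, CounterModel R I
        ⟨⟨(SAtom.pto x ys) ::ₘ φ, ξ⟩, ⟨(SAtom.pred p x zs) ::ₘ ψ, ζ⟩, V⟩ st h) ↔
      (∃ st' : Store I, CounterModel R I
        ⟨⟨(SAtom.pto x ys) ::ₘ φ, ξ⟩,
         ⟨(SAtom.pto x ys) ::ₘ (ψ'.map (SAtom.subst θ) + ψ), ζ⟩, V⟩ st' h) := by
  have hθfix : ∀ t ∈ Term.var σ.loc x :: zs, t.subst θ = t := by
    rintro (⟨s, n⟩ | ⟨s, c⟩) ht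
    · by_contra hne
      obtain ⟨-, hx, hzs⟩ := hdom (s, n) hne
      exact (List.mem_cons.mp ht).elim hx hzs
    · rfl
  have hθx : θ.app σ.loc x = Term.var σ.loc x := hθfix _ List.mem_cons_self
  have hpto : (SAtom.pto x us ::ₘ ψ').map (SAtom.subst θ) =
      SAtom.pto x ys ::ₘ ψ'.map (SAtom.subst θ) := by
    rw [Multiset.map_cons, SAtom.subst, Subst.locApp, hθx, happ]; rfl
  intro h
  refine exists_congr fun st => counterModel_iff_of_satH_iff fun hL hV hinj => ?_
  have hζ' : pureHolds (st.comp θ) ζ' :=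
    (pureHolds_map_subst st θ ζ').mp (hent.pureHolds hR.prules hL hV hinj)
  refine and_congr_left' ?_
  rw [← Multiset.cons_add]
  refine satS_cons_iff_add fun h1 h2 _ hsplit => ?_
  rw [← hpto, satS_map_subst]
  refine hunf.satA_pred_iff hR.prules hR.deterministic
    (fun t ht => by rw [tval_comp, hθfix t ht]) hζ' fun vs hvs => ?_
  have hx : some vs = some (ys.map (tval st)) :=
    (Heap.union_val_of_eq_some h2 hvs).symm.trans (hsplit ▸ satS_pto_cons_val hL.1)
  rw [Option.some.inj hx, ← happ, List.map_map]
  exact List.map_congr_left fun t _ => (tval_comp st θ t).symm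

end SLID
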